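/- Let P be a lazy, irreducible, aperiodic Markov chain on a finite state space K with stationary distribution π, let A ⊆ K, and set w(t) = inf{y ∈ [0,1] : π(A_y) ≤ t}. Then for 0 ≤ t ≤ π(A) one has Ψ̄(t,Aᶜ) = ∫_{w(t)}^1 (t − π(A_u)) du, and for π(A) < t ≤ 1 one has Ψ̄(t,Aᶜ) = ∫₀^{w(t)} (π(A_u) − t) du. -/

import Mathlib

open Finset MeasureTheory

noncomputable section

attribute [local instance] Classical.propDecidable

variable {K : Type*} [Fintype K]

/-- `matPow P t u v` is the `t`-step transition probability from `u` to `v`. -/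
def matPow (P : K → K → ℝ) : ℕ → K → K → ℝ
  | 0 => fun u v => if u = v then 1 else 0
  | (t + 1) => fun u v => ∑ w, matPow P t u w * P w v

/-- `P` is a stochastic matrix with (strictly positive) stationary distribution `π`. -/
structure IsMarkov (P : K → K → ℝ) (π : K → ℝ) : Prop where
  nonneg : ∀ u v, 0 ≤ P u v
  rowSum : ∀ u, ∑ v, P u v = 1
  piPos : ∀ v, 0 < π v
  piSum : ∑ v, π v = 1
  stationary : ∀ v, ∑ u, π u * P u v = π v

/-- `P` is lazy: every holding probability is at least `1/2`. -/
def IsLazy (P : K → K → ℝ) : Prop := ∀ u, (1 : ℝ) / 2 ≤ P u u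

/-- irreducibility: every state can reach every other state. -/
def MCIrreducible (P : K → K → ℝ) : Prop := ∀ u v : K, ∃ t : ℕ, 0 < matPow P t u v

/-- aperiodicity: the gcd of the return times of every state is `1`. -/
def MCAperiodic (P : K → K → ℝ) : Prop :=
  ∀ u : K, ∀ d : ℕ, (∀ t : ℕ, 0 < matPow P t u u → d ∣ t) → d ≤ 1

/-- reversibility: the detailed balance condition. -/
def IsReversible (P : K → K → ℝ) (π : K → ℝ) : Prop :=
  ∀ u v, π u * P u v = π v * P v u

/-- `π`-measure of a set. -/
def meas (π : K → ℝ) (A : Finset K) : ℝ := ∑ v ∈ A, π v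

/-- the time reversal `P̄(u,v) = π(v) P(v,u) / π(u)`. -/
def rev (P : K → K → ℝ) (π : K → ℝ) (u v : K) : ℝ := π v * P v u / π u

/-- transition probability from a point into a set, w.r.t. kernel `R`. -/
def setProb (R : K → K → ℝ) (v : K) (C : Finset K) : ℝ := ∑ c ∈ C, R v c

/-- the level set `A_u = {y : R(y,A) > u}`, w.r.t. kernel `R`. -/
def levelSet (R : K → K → ℝ) (A : Finset K) (u : ℝ) : Finset K :=
  Finset.univ.filter (fun y => u < setProb R y A)

/-- `g` is a fractional subset of `S` of measure `t`. -/
def IsFracSub (π : K → ℝ) (S : Finset K) (g : K → ℝ) (t : ℝ) : Prop :=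
  (∀ v, 0 ≤ g v ∧ g v ≤ 1) ∧ (∀ v ∉ S, g v = 0) ∧ ∑ v, g v * π v = t

/-- ergodic flow from a fractional subset `g` into `C`, w.r.t. kernel `R`. -/
def fracFlow (R : K → K → ℝ) (π : K → ℝ) (g : K → ℝ) (C : Finset K) : ℝ :=
  ∑ v, g v * π v * setProb R v C

/-- `Ψ(t, Aᶜ)` w.r.t. kernel `R`: for `t ≤ π(A)` the minimal flow into `Aᶜ` from a
fractional subset of `A` of measure `t`; for `t > π(A)` the minimal flow into `A`
from a fractional subset of `Aᶜ` of measure `1 − t`. -/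
def Psi (R : K → K → ℝ) (π : K → ℝ) (A : Finset K) (t : ℝ) : ℝ :=
  if t ≤ meas π A then
    sInf {q : ℝ | ∃ g : K → ℝ, IsFracSub π A g t ∧ q = fracFlow R π g Aᶜ}
  else
    sInf {q : ℝ | ∃ g : K → ℝ, IsFracSub π Aᶜ g (1 - t) ∧ q = fracFlow R π g A}

/-- `Ψ_big(t, Aᶜ)` w.r.t. kernel `R`: maximal flow into `Aᶜ` from a fractional
subset of `A` of measure `t`. -/
def PsiSup (R : K → K → ℝ) (π : K → ℝ) (A : Finset K) (t : ℝ) : ℝ :=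
  sSup {q : ℝ | ∃ g : K → ℝ, IsFracSub π A g t ∧ q = fracFlow R π g Aᶜ}

/-- the spread `ψ⁺(A)` (w.r.t. kernel `R`). -/
def psiPlus (R : K → K → ℝ) (π : K → ℝ) (A : Finset K) : ℝ :=
  (∫ t in (0:ℝ)..(meas π A), Psi R π A t) / (meas π A) ^ 2

/-- the quantity `ψ⁻(A)` (w.r.t. kernel `R`). -/
def psiMinus (R : K → K → ℝ) (π : K → ℝ) (A : Finset K) : ℝ :=
  (∫ t in (meas π A)..(1:ℝ), Psi R π A t) / (meas π A) ^ 2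

/-- the modified spread `ψ_mod(A)` (w.r.t. kernel `R`). -/
def psiMod (R : K → K → ℝ) (π : K → ℝ) (A : Finset K) : ℝ :=
  (∫ t in (0:ℝ)..(1:ℝ), Psi R π A t / min t (1 - t)) / meas π A

/-- the global spread `ψ_gl(A)` (w.r.t. kernel `R`). -/
def psiGl (R : K → K → ℝ) (π : K → ℝ) (A : Finset K) : ℝ :=
  (∫ t in (0:ℝ)..(1:ℝ), Psi R π A t) / (meas π A) ^ 2

/-- the quantity `ψ_big(A)` (w.r.t. kernel `R`). -/
def psiBig (R : K → K → ℝ) (π : K → ℝ) (A : Finset K) : ℝ :=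
  (∫ t in (0:ℝ)..(meas π A), PsiSup R π A t) / (meas π A) ^ 2

/-- the evolving-set quantity `ψ_evo(A)`, with level sets taken w.r.t. kernel `R`. -/
def psiEvo (R : K → K → ℝ) (π : K → ℝ) (A : Finset K) : ℝ :=
  1 - ∫ u in (0:ℝ)..(1:ℝ), Real.sqrt (meas π (levelSet R A u) / meas π A)

/-- ergodic flow `Q(B,C)`. -/
def ergFlow (P : K → K → ℝ) (π : K → ℝ) (B C : Finset K) : ℝ :=
  ∑ u ∈ B, ∑ v ∈ C, π u * P u v

/-- conductance `Φ(A)`. -/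
def conductance (P : K → K → ℝ) (π : K → ℝ) (A : Finset K) : ℝ :=
  ergFlow P π A Aᶜ / meas π A

def Qone (P : K → K → ℝ) (π : K → ℝ) (C D : Finset K) : ℝ :=
  ∑ v ∈ C, setProb P v D * π v

def Qtwo (P : K → K → ℝ) (π : K → ℝ) (C D : Finset K) : ℝ :=
  ∑ v ∈ C, Real.sqrt (setProb P v D) * π v

def Qinfty (P : K → K → ℝ) (π : K → ℝ) (C D : Finset K) : ℝ :=
  meas π (C.filter (fun v => 0 < setProb P v D))

/-- discrete gradient `h₁⁺(A)`. -/
def hOneP (P : K → K → ℝ) (π : K → ℝ) (A : Finset K) : ℝ :=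
  Qone P π A Aᶜ / min (meas π A) (meas π Aᶜ)

/-- discrete gradient `h₁⁻(A)`. -/
def hOneM (P : K → K → ℝ) (π : K → ℝ) (A : Finset K) : ℝ :=
  Qone P π Aᶜ A / min (meas π A) (meas π Aᶜ)

/-- discrete gradient `h₂⁺(A)`. -/
def hTwoP (P : K → K → ℝ) (π : K → ℝ) (A : Finset K) : ℝ :=
  Qtwo P π A Aᶜ / min (meas π A) (meas π Aᶜ)

/-- discrete gradient `h₂⁻(A)`. -/
def hTwoM (P : K → K → ℝ) (π : K → ℝ) (A : Finset K) : ℝ :=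
  Qtwo P π Aᶜ A / min (meas π A) (meas π Aᶜ)

/-- discrete gradient `h_∞⁺(A)`. -/
def hInfP (P : K → K → ℝ) (π : K → ℝ) (A : Finset K) : ℝ :=
  Qinfty P π A Aᶜ / min (meas π A) (meas π Aᶜ)

/-- discrete gradient `h_∞⁻(A)`. -/
def hInfM (P : K → K → ℝ) (π : K → ℝ) (A : Finset K) : ℝ :=
  Qinfty P π Aᶜ A / min (meas π A) (meas π Aᶜ)

/-- `p` is a probability distribution. -/
def IsDist (p : K → ℝ) : Prop := (∀ v, 0 ≤ p v) ∧ ∑ v, p v = 1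

/-- the distribution after `t` steps starting from `p`. -/
def stepDist (P : K → K → ℝ) (p : K → ℝ) (t : ℕ) (v : K) : ℝ :=
  ∑ u, p u * matPow P t u v

/-- total variation distance. -/
def tvDist (μ π : K → ℝ) : ℝ := (1 / 2) * ∑ v, |μ v - π v|

/-- chi-square distance. -/
def chi2Dist (μ π : K → ℝ) : ℝ := ∑ v, (μ v / π v - 1) ^ 2 * π v

/-- total variation mixing time `τ(ε)`: the max over initial distributions of the
least time at which total variation distance drops to `ε`. -/
def mixTV (P : K → K → ℝ) (π : K → ℝ) (ε : ℝ) : ℕ :=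
  sSup {n : ℕ | ∃ p : K → ℝ, IsDist p ∧
    n = sInf {t : ℕ | tvDist (stepDist P p t) π ≤ ε}}

/-- chi-square mixing time `χ²(ε)`. -/
def mixChi2 (P : K → K → ℝ) (π : K → ℝ) (ε : ℝ) : ℕ :=
  sSup {n : ℕ | ∃ p : K → ℝ, IsDist p ∧
    n = sInf {t : ℕ | chi2Dist (stepDist P p t) π ≤ ε}}

/-- `π₀ = min_v π(v)`. -/
def piMin (π : K → ℝ) : ℝ := sInf {r : ℝ | ∃ v : K, r = π v}

/-- `ψ⁺(x)`: worst spread over sets of measure at most `x`. -/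
def psiPlusSize (R : K → K → ℝ) (π : K → ℝ) (x : ℝ) : ℝ :=
  sInf {r : ℝ | ∃ A : Finset K, 0 < meas π A ∧ meas π A ≤ x ∧ r = psiPlus R π A}

/-- `ψ_evo(x)`: worst evolving-set quantity over sets of measure at most `x`. -/
def psiEvoSize (R : K → K → ℝ) (π : K → ℝ) (x : ℝ) : ℝ :=
  sInf {r : ℝ | ∃ A : Finset K, 0 < meas π A ∧ meas π A ≤ x ∧ r = psiEvo R π A}

/-- `ψ_big(x)`: worst `ψ_big` over sets of measure at most `x`. -/
def psiBigSize (R : K → K → ℝ) (π : K → ℝ) (x : ℝ) : ℝ :=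
  sInf {r : ℝ | ∃ A : Finset K, 0 < meas π A ∧ meas π A ≤ x ∧ r = psiBig R π A}

/-- Dirichlet form. -/
def dirichletForm (P : K → K → ℝ) (π : K → ℝ) (f : K → ℝ) : ℝ :=
  (1 / 2) * ∑ u, ∑ v, π u * P u v * (f u - f v) ^ 2

/-- variance w.r.t. `π`. -/
def varPi (π : K → ℝ) (f : K → ℝ) : ℝ :=
  ∑ v, π v * f v ^ 2 - (∑ v, π v * f v) ^ 2

/-- the spectral gap `λ`. -/
def specGap (P : K → K → ℝ) (π : K → ℝ) : ℝ :=
  sInf {r : ℝ | ∃ f : K → ℝ, (∃ u v, f u ≠ f v) ∧ r = dirichletForm P π f / varPi π f}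

/-- `P_* = 1 − min_{u ∈ A} P(u, A)`. -/
def Pstar (P : K → K → ℝ) (A : Finset K) : ℝ :=
  1 - sInf {r : ℝ | ∃ u ∈ A, r = setProb P u A}

/-- `P_min = min {P(u,v)/π(v) : u ∈ A, v ∈ Aᶜ, P(u,v) > 0}`. -/
def PminEdge (P : K → K → ℝ) (π : K → ℝ) (A : Finset K) : ℝ :=
  sInf {r : ℝ | ∃ u ∈ A, ∃ v ∈ Aᶜ, 0 < P u v ∧ r = P u v / π v}

/-- `w(t) = inf {y ∈ [0,1] : π(A_y) ≤ t}`. -/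
def wfun (R : K → K → ℝ) (π : K → ℝ) (A : Finset K) (t : ℝ) : ℝ :=
  sInf {y : ℝ | y ∈ Set.Icc (0:ℝ) 1 ∧ meas π (levelSet R A y) ≤ t}

/-!
Write `f y = P̄(y, A)`. Laziness of `P` (hence of `P̄`) gives `f ≥ 1/2` on `A` and `f ≤ 1/2`
off `A`, so `A ⊆ A_u` for `u < 1/2` and `A_u ⊆ A` for `u ≥ 1/2`.

By the layer-cake formula the flow `∑ g π f` of a fractional subset `g` of `S` of measure `s`
is `∫₀¹ (gπ)({f > u}) du`, and the integrand is at most `min(s, π(S ∩ {f > u}))`. The greedy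
fractional subset, which fills `S` along decreasing values of `f` and splits the threshold
level, attains this bound for all `u` at once (bathtub principle). The minimal flow is handled
in the same way through `(gπ)({f > u}) = s - (gπ)({f ≤ u})`.
Hence `Ψ̄(t, Aᶜ) = ∫₀¹ (t - π(A_u))⁺ du` for `t ≤ π(A)` and `∫₀¹ (π(A_u) - t)⁺ du` for
`t > π(A)`. Since `u ↦ π(A_u)` is antitone, these positive parts live on `[w(t), 1]` and
`[0, w(t)]` respectively.
-/

lemma meas_mono {ι : Type*} {π : ι → ℝ} (hπ : ∀ v, 0 ≤ π v) : Monotone (meas π) :=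
  sum_mono_set_of_nonneg hπ

lemma exists_threshold {ι : Type*} {π : ι → ℝ} {S : Finset ι} {s : ℝ} (hπ : ∀ v, 0 ≤ π v)
    (hs : 0 ≤ s) (hsS : s ≤ meas π S) (f : ι → ℝ) :
    ∃ θ, meas π (S.filter (θ < f ·)) ≤ s ∧ s ≤ meas π (S.filter (θ ≤ f ·)) := by
  rcases S.eq_empty_or_nonempty with rfl | hS
  · exact ⟨0, by simpa [meas] using hs, by simpa [meas] using hsS⟩
  set T := (S.image f).filter fun c => s ≤ meas π (S.filter (c ≤ f ·))
  obtain ⟨v₀, hv₀S, hv₀⟩ := S.exists_min_image f hS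
  have hT : T.Nonempty := ⟨f v₀, mem_filter.2 ⟨mem_image_of_mem f hv₀S,
    by rwa [filter_true_of_mem fun v hv => hv₀ v hv]⟩⟩
  set θ := T.max' hT
  refine ⟨θ, ?_, (mem_filter.1 (T.max'_mem hT)).2⟩
  by_contra! hlt
  have hB : (S.filter (θ < f ·)).Nonempty := by
    by_contra hB
    rw [not_nonempty_iff_eq_empty] at hB
    simp only [hB, meas, sum_empty] at hlt
    linarith
  obtain ⟨v, hv, hvmin⟩ := (S.filter (θ < f ·)).exists_min_image f hB
  have hvT : f v ∈ T := by
    refine mem_filter.2 ⟨mem_image_of_mem f (mem_filter.1 hv).1, hlt.le.trans (meas_mono hπ ?_)⟩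
    intro w hw
    exact mem_filter.2 ⟨(mem_filter.1 hw).1, hvmin w hw⟩
  exact (T.le_max' _ hvT).not_gt (mem_filter.1 hv).2

section FractionalSubset

variable {π g : K → ℝ} {S : Finset K} {s : ℝ}

lemma IsFracSub.sum_inter (hg : IsFracSub π S g s) (T : Finset K) :
    ∑ v ∈ S ∩ T, g v * π v = ∑ v ∈ T, g v * π v :=
  sum_subset inter_subset_right fun v hvT hv => by
    rw [hg.2.1 v fun hvS => hv (mem_inter.2 ⟨hvS, hvT⟩), zero_mul]

lemma IsFracSub.sum_le_min (hg : IsFracSub π S g s) (hπ : ∀ v, 0 ≤ π v) (T : Finset K) :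
    ∑ v ∈ T, g v * π v ≤ min s (meas π (S ∩ T)) := by
  refine le_min ?_ ?_
  · rw [← hg.2.2]
    exact sum_le_sum_of_subset_of_nonneg (subset_univ T) fun v _ _ =>
      mul_nonneg (hg.1 v).1 (hπ v)
  · rw [← hg.sum_inter]
    exact sum_le_sum fun v _ => mul_le_of_le_one_left (hπ v) (hg.1 v).2

lemma IsFracSub.sum_filter_lt (hg : IsFracSub π S g s) (f : K → ℝ) (u : ℝ) :
    ∑ v ∈ univ.filter (u < f ·), g v * π v = s - ∑ v ∈ univ.filter (f · ≤ u), g v * π v := by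
  rw [← hg.2.2, ← sum_filter_add_sum_filter_not univ (u < f ·)]
  simp only [not_lt, add_sub_cancel_right]

lemma exists_isFracSub_of_threshold (hπ : ∀ v, 0 ≤ π v) {f : K → ℝ} {θ : ℝ}
    (hB : meas π (S.filter (θ < f ·)) ≤ s) (hBC : s ≤ meas π (S.filter (θ ≤ f ·))) :
    ∃ g, IsFracSub π S g s ∧ (∀ v ∈ S, θ < f v → g v = 1) ∧ ∀ v, f v < θ → g v = 0 := by
  set B := S.filter (θ < f ·)
  set C := S.filter (f · = θ)
  have hBCdisj : Disjoint B C := disjoint_filter.2 fun v _ h h' => h.ne' h'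
  have hsplit : meas π (S.filter (θ ≤ f ·)) = meas π B + meas π C := by
    rw [meas, meas, meas, ← sum_union hBCdisj, ← filter_or]
    exact sum_congr (filter_congr fun v _ => by rw [le_iff_lt_or_eq, eq_comm]) fun _ _ => rfl
  have hC : 0 ≤ meas π C := sum_nonneg fun v _ => hπ v
  set α := (s - meas π B) / meas π C
  have hαC : α * meas π C = s - meas π B := by
    rcases hC.eq_or_lt with h | h
    · rw [← h, mul_zero]; linarith
    · exact div_mul_cancel₀ _ h.ne'
  have hα0 : 0 ≤ α := div_nonneg (by linarith) hC
  have hα1 : α ≤ 1 := div_le_one_of_le₀ (by linarith) hC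
  set g : K → ℝ := fun v => if v ∈ B then 1 else if v ∈ C then α else 0
  have hgπ : ∀ v, g v * π v = (if v ∈ B then π v else 0) + if v ∈ C then α * π v else 0 := by
    intro v
    by_cases hvB : v ∈ B
    · simp [g, hvB, disjoint_left.1 hBCdisj hvB]
    · simp [g, hvB]
  refine ⟨g, ⟨fun v => ?_, fun v hv => ?_, ?_⟩, fun v hv hθ => ?_, fun v hθ => ?_⟩
  · simp only [g]; split_ifs <;> simp [hα0, hα1]
  · simp [g, B, C, hv]
  · simp only [hgπ, sum_add_distrib, sum_ite_mem, univ_inter, ← mul_sum]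
    rw [← meas, ← meas, hαC]
    ring
  · simp [g, B, hv, hθ]
  · simp [g, B, C, hθ.not_gt, hθ.ne]

theorem exists_isFracSub_sum_eq_min (hπ : ∀ v, 0 ≤ π v) (hs : 0 ≤ s) (hsS : s ≤ meas π S)
    (f : K → ℝ) :
    ∃ g, IsFracSub π S g s ∧ ∀ T : Finset K, (∀ v ∈ T, ∀ w, f v ≤ f w → w ∈ T) →
      ∑ v ∈ T, g v * π v = min s (meas π (S ∩ T)) := by
  obtain ⟨θ, hB, hBC⟩ := exists_threshold hπ hs hsS f
  obtain ⟨g, hg, hg1, hg0⟩ := exists_isFracSub_of_threshold hπ hB hBC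
  refine ⟨g, hg, fun T hT => ?_⟩
  by_cases hTθ : ∃ v ∈ T, f v ≤ θ
  · obtain ⟨v, hvT, hvθ⟩ := hTθ
    have hsub : S.filter (θ ≤ f ·) ⊆ S ∩ T := fun w hw =>
      mem_inter.2 ⟨(mem_filter.1 hw).1, hT v hvT w (hvθ.trans (mem_filter.1 hw).2)⟩
    rw [min_eq_left (hBC.trans (meas_mono hπ hsub)), ← hg.2.2]
    refine sum_subset (subset_univ T) fun w _ hwT => ?_
    have hw0 : g w = 0 := by
      by_cases hwS : w ∈ S
      · exact hg0 w (lt_of_not_ge fun h => hwT (mem_inter.1 (hsub (mem_filter.2 ⟨hwS, h⟩))).2)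
      · exact hg.2.1 w hwS
    rw [hw0, zero_mul]
  · push Not at hTθ
    have hsub : S ∩ T ⊆ S.filter (θ < f ·) := fun w hw =>
      mem_filter.2 ⟨(mem_inter.1 hw).1, hTθ w (mem_inter.1 hw).2⟩
    rw [min_eq_right ((meas_mono hπ hsub).trans hB), ← hg.sum_inter, meas]
    exact sum_congr rfl fun w hw => by
      rw [hg1 w (mem_inter.1 hw).1 (hTθ w (mem_inter.1 hw).2), one_mul]

end FractionalSubset

lemma antitone_ite_lt {x c : ℝ} (hc : 0 ≤ c) : Antitone fun u : ℝ => if u < x then c else 0 := by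
  intro a b hab
  dsimp only
  split_ifs with hb ha <;> first | rfl | exact hc | exact absurd (hab.trans_lt hb) ha

lemma integral_ite_lt {x c : ℝ} (hx : x ∈ Set.Icc (0 : ℝ) 1) (hc : 0 ≤ c) :
    ∫ u in (0 : ℝ)..1, (if u < x then c else 0) = c * x := by
  rw [← intervalIntegral.integral_add_adjacent_intervals (b := x)
      (antitone_ite_lt hc).intervalIntegrable (antitone_ite_lt hc).intervalIntegrable,
    intervalIntegral.integral_congr_Ioo_of_le hx.1 (g := fun _ => c) fun u hu => if_pos hu.2,
    intervalIntegral.integral_congr_Ioo_of_le hx.2 (g := fun _ => 0)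
      fun u hu => if_neg hu.1.not_gt]
  simp [mul_comm]

lemma antitone_sum_filter_lt {ι : Type*} {w : ι → ℝ} (hw : ∀ v, 0 ≤ w v) (S : Finset ι)
    (f : ι → ℝ) : Antitone fun u => ∑ v ∈ S.filter (u < f ·), w v :=
  fun _ _ hab => sum_mono_set_of_nonneg hw fun _ hv =>
    mem_filter.2 ⟨(mem_filter.1 hv).1, hab.trans_lt (mem_filter.1 hv).2⟩

lemma monotone_sum_filter_le {ι : Type*} {w : ι → ℝ} (hw : ∀ v, 0 ≤ w v) (S : Finset ι)
    (f : ι → ℝ) : Monotone fun u => ∑ v ∈ S.filter (f · ≤ u), w v :=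
  fun _ _ hab => sum_mono_set_of_nonneg hw fun _ hv =>
    mem_filter.2 ⟨(mem_filter.1 hv).1, (mem_filter.1 hv).2.trans hab⟩

theorem sum_mul_eq_integral_sum_filter_lt {w f : K → ℝ} (hw : ∀ v, 0 ≤ w v)
    (hf : ∀ v, f v ∈ Set.Icc (0 : ℝ) 1) :
    ∑ v, w v * f v = ∫ u in (0 : ℝ)..1, ∑ v ∈ univ.filter (u < f ·), w v := by
  simp only [sum_filter]
  rw [intervalIntegral.integral_finsetSum fun v _ => (antitone_ite_lt (hw v)).intervalIntegrable]
  exact sum_congr rfl fun v _ => (integral_ite_lt (hf v) (hw v)).symm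

section Bathtub

variable {π f : K → ℝ} {S : Finset K} {s : ℝ}

lemma IsFracSub.sum_mul_eq_integral {g : K → ℝ} (hg : IsFracSub π S g s) (hπ : ∀ v, 0 ≤ π v)
    (hf : ∀ v, f v ∈ Set.Icc (0 : ℝ) 1) :
    ∑ v, g v * π v * f v = ∫ u in (0 : ℝ)..1, ∑ v ∈ univ.filter (u < f ·), g v * π v :=
  sum_mul_eq_integral_sum_filter_lt (fun v => mul_nonneg (hg.1 v).1 (hπ v)) hf

theorem isGreatest_sum_mul (hπ : ∀ v, 0 ≤ π v) (hs : 0 ≤ s) (hsS : s ≤ meas π S)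
    (hf : ∀ v, f v ∈ Set.Icc (0 : ℝ) 1) :
    IsGreatest {q | ∃ g, IsFracSub π S g s ∧ q = ∑ v, g v * π v * f v}
      (∫ u in (0 : ℝ)..1, min s (meas π (S.filter (u < f ·)))) := by
  have hS : ∀ u, S ∩ univ.filter (u < f ·) = S.filter (u < f ·) := fun u => by
    rw [inter_filter, inter_univ]
  constructor
  · obtain ⟨g, hg, hgT⟩ := exists_isFracSub_sum_eq_min hπ hs hsS f
    refine ⟨g, hg, ?_⟩
    rw [hg.sum_mul_eq_integral hπ hf]
    refine intervalIntegral.integral_congr fun u _ => ?_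
    rw [← hS, hgT]
    intro v hv w hvw
    simp only [mem_filter, mem_univ, true_and] at hv ⊢
    exact hv.trans_le hvw
  · rintro q ⟨g, hg, rfl⟩
    rw [hg.sum_mul_eq_integral hπ hf]
    refine intervalIntegral.integral_mono_on zero_le_one
      (antitone_sum_filter_lt (fun v => mul_nonneg (hg.1 v).1 (hπ v)) _ f).intervalIntegrable
      (antitone_const.min (antitone_sum_filter_lt hπ S f)).intervalIntegrable
      fun u _ => ?_
    rw [← hS]
    exact hg.sum_le_min hπ _

theorem isLeast_sum_mul (hπ : ∀ v, 0 ≤ π v) (hs : 0 ≤ s) (hsS : s ≤ meas π S)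
    (hf : ∀ v, f v ∈ Set.Icc (0 : ℝ) 1) :
    IsLeast {q | ∃ g, IsFracSub π S g s ∧ q = ∑ v, g v * π v * f v}
      (∫ u in (0 : ℝ)..1, (s - min s (meas π (S.filter (f · ≤ u))))) := by
  have hS : ∀ u, S ∩ univ.filter (f · ≤ u) = S.filter (f · ≤ u) := fun u => by
    rw [inter_filter, inter_univ]
  constructor
  · obtain ⟨g, hg, hgT⟩ := exists_isFracSub_sum_eq_min hπ hs hsS (-f ·)
    refine ⟨g, hg, ?_⟩
    rw [hg.sum_mul_eq_integral hπ hf]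
    refine intervalIntegral.integral_congr fun u _ => ?_
    rw [hg.sum_filter_lt, ← hS, hgT]
    intro v hv w hvw
    simp only [mem_filter, mem_univ, true_and] at hv ⊢
    linarith
  · rintro q ⟨g, hg, rfl⟩
    have hanti : Antitone fun u => s - min s (meas π (S.filter (f · ≤ u))) := fun _ _ hab =>
      sub_le_sub_left (min_le_min_left s (monotone_sum_filter_le hπ S f hab)) s
    rw [hg.sum_mul_eq_integral hπ hf]
    refine intervalIntegral.integral_mono_on zero_le_one hanti.intervalIntegrable
      (antitone_sum_filter_lt (fun v => mul_nonneg (hg.1 v).1 (hπ v)) _ f).intervalIntegrable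
      fun u _ => ?_
    rw [hg.sum_filter_lt, ← hS]
    exact sub_le_sub_left (hg.sum_le_min hπ _) s

end Bathtub

/-- `wfun R π A` is `crossing (fun u => meas π (levelSet R A u))` by definition. -/
def crossing (F : ℝ → ℝ) (t : ℝ) : ℝ := sInf {y | y ∈ Set.Icc (0 : ℝ) 1 ∧ F y ≤ t}

section Crossing

variable {F : ℝ → ℝ} {t : ℝ}

lemma one_mem_crossing_set (hF1 : F 1 ≤ t) : 1 ∈ {y | y ∈ Set.Icc (0 : ℝ) 1 ∧ F y ≤ t} :=
  ⟨⟨zero_le_one, le_rfl⟩, hF1⟩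

lemma crossing_mem_Icc (hF1 : F 1 ≤ t) : crossing F t ∈ Set.Icc (0 : ℝ) 1 :=
  ⟨le_csInf ⟨1, one_mem_crossing_set hF1⟩ fun _ hy => hy.1.1,
    csInf_le ⟨0, fun _ hy => hy.1.1⟩ (one_mem_crossing_set hF1)⟩

lemma le_of_crossing_lt (hF : Antitone F) (hF1 : F 1 ≤ t) {u : ℝ} (hu : crossing F t < u) :
    F u ≤ t := by
  obtain ⟨y, hy, hyu⟩ := exists_lt_of_csInf_lt ⟨1, one_mem_crossing_set hF1⟩ hu
  exact (hF hyu.le).trans hy.2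

lemma lt_of_lt_crossing (hF1 : F 1 ≤ t) {u : ℝ} (hu0 : 0 ≤ u) (hu : u < crossing F t) :
    t < F u := by
  by_contra! h
  exact hu.not_ge (csInf_le ⟨0, fun _ hy => hy.1.1⟩
    ⟨⟨hu0, hu.le.trans (crossing_mem_Icc hF1).2⟩, h⟩)

theorem integral_max_const_sub_eq (hF : Antitone F) (hF1 : F 1 ≤ t) :
    ∫ u in (0 : ℝ)..1, max (t - F u) 0 = ∫ u in crossing F t..1, (t - F u) := by
  have hmono : Monotone fun u => max (t - F u) 0 := fun _ _ hab =>
    max_le_max (sub_le_sub_left (hF hab) t) le_rfl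
  have hw := crossing_mem_Icc hF1
  rw [← intervalIntegral.integral_add_adjacent_intervals hmono.intervalIntegrable
      hmono.intervalIntegrable,
    intervalIntegral.integral_congr_Ioo_of_le hw.1 (g := fun _ => 0) fun u hu =>
      max_eq_right (sub_nonpos.2 (lt_of_lt_crossing hF1 hu.1.le hu.2).le),
    intervalIntegral.integral_zero, zero_add]
  exact intervalIntegral.integral_congr_Ioo_of_le hw.2 fun u hu =>
    max_eq_left (sub_nonneg.2 (le_of_crossing_lt hF hF1 hu.1))

theorem integral_max_sub_const_eq (hF : Antitone F) (hF1 : F 1 ≤ t) :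
    ∫ u in (0 : ℝ)..1, max (F u - t) 0 = ∫ u in (0 : ℝ)..crossing F t, (F u - t) := by
  have hanti : Antitone fun u => max (F u - t) 0 := fun _ _ hab =>
    max_le_max (sub_le_sub_right (hF hab) t) le_rfl
  have hw := crossing_mem_Icc hF1
  rw [← intervalIntegral.integral_add_adjacent_intervals hanti.intervalIntegrable
      hanti.intervalIntegrable,
    intervalIntegral.integral_congr_Ioo_of_le hw.2 (g := fun _ => 0) fun u hu =>
      max_eq_right (sub_nonpos.2 (le_of_crossing_lt hF hF1 hu.1)),
    intervalIntegral.integral_zero, add_zero]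
  exact intervalIntegral.integral_congr_Ioo_of_le hw.1 fun u hu =>
    max_eq_left (sub_nonneg.2 (lt_of_lt_crossing hF1 hu.1.le hu.2).le)

end Crossing

lemma half_le_setProb {ι : Type*} {R : ι → ι → ℝ} (hR : ∀ u v, 0 ≤ R u v) (hlazy : IsLazy R)
    {A : Finset ι} {y : ι} (hy : y ∈ A) : 1 / 2 ≤ setProb R y A :=
  (hlazy y).trans (single_le_sum (fun v _ => hR y v) hy)

section LazyKernel

variable {R : K → K → ℝ} {π : K → ℝ} {A : Finset K}

lemma IsMarkov.meas_add_meas_compl (hM : IsMarkov R π) (A : Finset K) :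
    meas π A + meas π Aᶜ = 1 := by
  rw [meas, meas, sum_add_sum_compl, hM.piSum]

lemma IsMarkov.setProb_add_setProb_compl (hM : IsMarkov R π) (A : Finset K) (y : K) :
    setProb R y A + setProb R y Aᶜ = 1 := by
  rw [setProb, setProb, sum_add_sum_compl, hM.rowSum]

lemma IsMarkov.setProb_mem_Icc (hM : IsMarkov R π) (A : Finset K) (y : K) :
    setProb R y A ∈ Set.Icc (0 : ℝ) 1 := by
  have hnonneg : ∀ C : Finset K, 0 ≤ setProb R y C := fun C => sum_nonneg fun v _ => hM.nonneg y v
  exact ⟨hnonneg A, by linarith [hM.setProb_add_setProb_compl A y, hnonneg Aᶜ]⟩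

lemma setProb_le_half (hM : IsMarkov R π) (hlazy : IsLazy R) {y : K} (hy : y ∉ A) :
    setProb R y A ≤ 1 / 2 := by
  linarith [hM.setProb_add_setProb_compl A y, half_le_setProb hM.nonneg hlazy (mem_compl.2 hy)]

lemma subset_levelSet (hR : ∀ u v, 0 ≤ R u v) (hlazy : IsLazy R) {u : ℝ} (hu : u < 1 / 2) :
    A ⊆ levelSet R A u := fun y hy =>
  mem_filter.2 ⟨mem_univ y, hu.trans_le (half_le_setProb hR hlazy hy)⟩

lemma levelSet_subset (hM : IsMarkov R π) (hlazy : IsLazy R) {u : ℝ} (hu : 1 / 2 ≤ u) :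
    levelSet R A u ⊆ A := fun y hy => by
  by_contra hyA
  linarith [(mem_filter.1 hy).2, setProb_le_half hM hlazy hyA]

lemma antitone_meas_levelSet (hπ : ∀ v, 0 ≤ π v) (R : K → K → ℝ) (A : Finset K) :
    Antitone fun u => meas π (levelSet R A u) :=
  antitone_sum_filter_lt hπ univ _

lemma meas_levelSet_one (hM : IsMarkov R π) (A : Finset K) : meas π (levelSet R A 1) = 0 := by
  rw [levelSet, filter_false_of_mem fun y _ => not_lt.2 (hM.setProb_mem_Icc A y).2]
  exact sum_empty

lemma min_meas_filter_lt_eq (hM : IsMarkov R π) (hlazy : IsLazy R) {t : ℝ}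
    (htA : t ≤ meas π A) (u : ℝ) :
    min t (meas π (A.filter (u < setProb R · A))) = min t (meas π (levelSet R A u)) := by
  rcases lt_or_ge u (1 / 2) with hu | hu
  · rw [filter_true_of_mem fun y hy => hu.trans_le (half_le_setProb hM.nonneg hlazy hy),
      min_eq_left htA, min_eq_left (htA.trans (meas_mono (fun v => (hM.piPos v).le)
        (subset_levelSet hM.nonneg hlazy hu)))]
  · congr 2
    ext y
    simp only [mem_filter, levelSet, mem_univ, true_and]
    exact ⟨And.right, fun h => ⟨levelSet_subset hM hlazy hu (mem_filter.2 ⟨mem_univ y, h⟩), h⟩⟩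

lemma sub_min_meas_filter_le_eq (hM : IsMarkov R π) (hlazy : IsLazy R) {t : ℝ}
    (htA : meas π A < t) (u : ℝ) :
    1 - t - min (1 - t) (meas π (Aᶜ.filter (setProb R · A ≤ u)))
      = max (meas π (levelSet R A u) - t) 0 := by
  rcases lt_or_ge u (1 / 2) with hu | hu
  · have hfilter : Aᶜ.filter (setProb R · A ≤ u) = (levelSet R A u)ᶜ := by
      ext y
      simp only [mem_filter, mem_compl, levelSet, mem_univ, true_and, not_lt]
      exact ⟨And.right, fun h => ⟨fun hy => by
        linarith [half_le_setProb hM.nonneg hlazy hy], h⟩⟩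
    have hF := hM.meas_add_meas_compl (levelSet R A u)
    rw [hfilter, ← max_sub_sub_left, sub_self, max_comm]
    congr 1
    linarith
  · have hcompl := hM.meas_add_meas_compl A
    rw [filter_true_of_mem fun y hy => (setProb_le_half hM hlazy (mem_compl.1 hy)).trans hu,
      min_eq_left (by linarith), sub_self]
    have hF := meas_mono (fun v => (hM.piPos v).le) (levelSet_subset (A := A) hM hlazy hu)
    exact (max_eq_right (by linarith)).symm

theorem Psi_eq_integral_max_const_sub (hM : IsMarkov R π) (hlazy : IsLazy R) {t : ℝ}
    (ht0 : 0 ≤ t) (htA : t ≤ meas π A) :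
    Psi R π A t = ∫ u in (0 : ℝ)..1, max (t - meas π (levelSet R A u)) 0 := by
  have hπ : ∀ v, 0 ≤ π v := fun v => (hM.piPos v).le
  have hG := isGreatest_sum_mul hπ ht0 htA (hM.setProb_mem_Icc A)
  have hflow : ∀ g, IsFracSub π A g t →
      fracFlow R π g Aᶜ = t - ∑ v, g v * π v * setProb R v A := by
    intro g hg
    rw [fracFlow, ← hg.2.2, ← sum_sub_distrib]
    exact sum_congr rfl fun v _ => by
      linear_combination (g v * π v) * hM.setProb_add_setProb_compl A v
  have hleast : IsLeast {q | ∃ g, IsFracSub π A g t ∧ q = fracFlow R π g Aᶜ}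
      (t - ∫ u in (0 : ℝ)..1, min t (meas π (A.filter (u < setProb R · A)))) := by
    refine ⟨?_, ?_⟩
    · obtain ⟨g, hg, hq⟩ := hG.1
      exact ⟨g, hg, by rw [hflow g hg, hq]⟩
    · rintro q ⟨g, hg, rfl⟩
      rw [hflow g hg]
      linarith [hG.2 ⟨g, hg, rfl⟩]
  have hint : IntervalIntegrable (fun u => min t (meas π (A.filter (u < setProb R · A))))
      volume 0 1 := (antitone_const.min (antitone_sum_filter_lt hπ A _)).intervalIntegrable
  have hpoint : ∀ u, max (t - meas π (levelSet R A u)) 0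
      = t - min t (meas π (A.filter (u < setProb R · A))) := fun u => by
    rw [min_meas_filter_lt_eq hM hlazy htA, ← max_sub_sub_left, sub_self, max_comm]
  rw [Psi, if_pos htA, hleast.csInf_eq, intervalIntegral.integral_congr fun u _ => hpoint u,
    intervalIntegral.integral_sub intervalIntegrable_const hint]
  simp

theorem Psi_eq_integral_max_sub_const (hM : IsMarkov R π) (hlazy : IsLazy R) {t : ℝ}
    (htA : meas π A < t) (ht1 : t ≤ 1) :
    Psi R π A t = ∫ u in (0 : ℝ)..1, max (meas π (levelSet R A u) - t) 0 := by
  have hcompl := hM.meas_add_meas_compl A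
  rw [Psi, if_neg htA.not_ge]
  exact (isLeast_sum_mul (fun v => (hM.piPos v).le) (sub_nonneg.2 ht1) (by linarith)
    (hM.setProb_mem_Icc A)).csInf_eq.trans
      (intervalIntegral.integral_congr fun u _ => sub_min_meas_filter_le_eq hM hlazy htA u)

end LazyKernel

lemma IsMarkov.rev {P : K → K → ℝ} {π : K → ℝ} (hM : IsMarkov P π) : IsMarkov (rev P π) π where
  nonneg u v := div_nonneg (mul_nonneg (hM.piPos v).le (hM.nonneg v u)) (hM.piPos u).le
  rowSum u := by
    simp only [_root_.rev]
    rw [← sum_div, hM.stationary u, div_self (hM.piPos u).ne']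
  piPos := hM.piPos
  piSum := hM.piSum
  stationary v := by
    simp only [_root_.rev]
    rw [sum_congr rfl fun u _ => mul_div_cancel₀ _ (hM.piPos u).ne', ← mul_sum, hM.rowSum,
      mul_one]

lemma IsLazy.rev {ι : Type*} {P : ι → ι → ℝ} {π : ι → ℝ} (hlazy : IsLazy P)
    (hπ : ∀ v, π v ≠ 0) : IsLazy (rev P π) := fun u => by
  rw [_root_.rev, mul_div_cancel_left₀ _ (hπ u)]
  exact hlazy u

theorem Psi_eq_levelSet_integral_general
    (P : K → K → ℝ) (π : K → ℝ) (A : Finset K)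
    (hM : IsMarkov P π) (hlazy : IsLazy P) :
    (∀ t : ℝ, 0 ≤ t → t ≤ meas π A →
      Psi (rev P π) π A t =
        ∫ u in (wfun (rev P π) π A t)..(1:ℝ), (t - meas π (levelSet (rev P π) A u))) ∧
    (∀ t : ℝ, meas π A < t → t ≤ 1 →
      Psi (rev P π) π A t =
        ∫ u in (0:ℝ)..(wfun (rev P π) π A t), (meas π (levelSet (rev P π) A u) - t)) := by
  have hMrev := hM.rev
  have hlazyRev := hlazy.rev fun v => (hM.piPos v).ne'
  have hF := antitone_meas_levelSet (fun v => (hM.piPos v).le) (rev P π) A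
  have hF1 := meas_levelSet_one hMrev A
  have hA : 0 ≤ meas π A := sum_nonneg fun v _ => (hM.piPos v).le
  refine ⟨fun t ht0 htA => ?_, fun t htA ht1 => ?_⟩
  · rw [Psi_eq_integral_max_const_sub hMrev hlazyRev ht0 htA]
    exact integral_max_const_sub_eq hF (hF1.trans_le ht0)
  · rw [Psi_eq_integral_max_sub_const hMrev hlazyRev htA ht1]
    exact integral_max_sub_const_eq hF (by linarith)

/-- the rewriting of `Ψ̄(t, Aᶜ)` in terms of the level-set measures. -/
theorem Psi_eq_levelSet_integral
    (P : K → K → ℝ) (π : K → ℝ) (A : Finset K)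
    (hM : IsMarkov P π) (hlazy : IsLazy P)
    (hirr : MCIrreducible P) (hap : MCAperiodic P) :
    (∀ t : ℝ, 0 ≤ t → t ≤ meas π A →
      Psi (rev P π) π A t =
        ∫ u in (wfun (rev P π) π A t)..(1:ℝ), (t - meas π (levelSet (rev P π) A u))) ∧
    (∀ t : ℝ, meas π A < t → t ≤ 1 →
      Psi (rev P π) π A t =
        ∫ u in (0:ℝ)..(wfun (rev P π) π A t), (meas π (levelSet (rev P π) A u) - t)) :=
  Psi_eq_levelSet_integral_general P π A hM hlazy
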